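/- Let α₁ = −16/111, α₂ = 31/666 + (1/18)·√(127/37)·i and α₃ = conj(α₂). There is no finite subset X of the complex unit sphere Ω(63) such that: (i) for all distinct x, y ∈ X, x*y ∈ {α₁, α₂, α₃}; and (ii) for every x ∈ X, the number of y ∈ X with x*y = α₁ is 222, the number with x*y = α₂ is 333, and the number with x*y = α₃ is 333. -/

import Mathlib

/-!
The Gram matrix of `X` is positive semidefinite, hence so is its entrywise cube by the Schur
product theorem, and the sum of all entries of that cube is a nonnegative real number. Distance
invariance makes every row of the cube sum to `1 + 222 α₁³ + 333 α₂³ + 333 α₃³ ≈ -0.58`, so the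
total is `|X|` times a negative number.
-/

open Finset
open scoped Classical

noncomputable def hermInner {d : ℕ} (a b : Fin d → ℂ) : ℂ :=
  ∑ i, (starRingEnd ℂ) (a i) * b i

open Matrix
open scoped InnerProductSpace ComplexOrder

section
variable {𝕜 E ι : Type*} [RCLike 𝕜] [SeminormedAddCommGroup E] [InnerProductSpace 𝕜 E]
  [Fintype ι]

theorem Matrix.posSemidef_map_pow_gram (v : ι → E) (k : ℕ) :
    ((gram 𝕜 v).map (· ^ k)).PosSemidef := by
  induction k with
  | zero =>
    convert posSemidef_vecMulVec_self_star (fun _ : ι ↦ (1 : 𝕜)) using 1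
    ext i j
    simp [vecMulVec_apply]
  | succ k ih =>
    convert ih.hadamard (posSemidef_gram 𝕜 v) using 1
    ext i j
    simp [pow_succ]

theorem Matrix.PosSemidef.sum_sum_nonneg {M : Matrix ι ι 𝕜} (hM : M.PosSemidef) :
    0 ≤ ∑ i, ∑ j, M i j := by
  simpa [dotProduct, mulVec, Finset.sum_comm] using hM.dotProduct_mulVec_nonneg 1

theorem Finset.sum_sum_inner_pow_nonneg {β : Type*} (X : Finset β) (v : β → E) (k : ℕ) :
    0 ≤ ∑ x ∈ X, ∑ y ∈ X, ⟪v x, v y⟫_𝕜 ^ k := by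
  simpa [← Finset.sum_coe_sort X] using
    (posSemidef_map_pow_gram (𝕜 := 𝕜) (fun x : X ↦ v x) k).sum_sum_nonneg
end

theorem hermInner_eq_inner {d : ℕ} (a b : Fin d → ℂ) :
    hermInner a b = ⟪WithLp.toLp 2 a, WithLp.toLp 2 b⟫_ℂ := by
  simp [hermInner, PiLp.inner_apply, mul_comm]

theorem sum_sum_hermInner_pow_nonneg {d : ℕ} (X : Finset (Fin d → ℂ)) (k : ℕ) :
    0 ≤ ∑ x ∈ X, ∑ y ∈ X, hermInner x y ^ k := by
  simpa only [hermInner_eq_inner] using X.sum_sum_inner_pow_nonneg (WithLp.toLp 2) k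

theorem Finset.sum_comp_eq_of_three_values {β V M : Type*} [AddCommMonoid M] {s : Finset β}
    {φ : β → V} {x : β} (hx : x ∈ s) {a₀ a₁ a₂ a₃ : V} (ha : [a₀, a₁, a₂, a₃].Nodup)
    (hφx : φ x = a₀) (hφ : ∀ y ∈ s, x ≠ y → φ y = a₁ ∨ φ y = a₂ ∨ φ y = a₃) (f : V → M) :
    ∑ y ∈ s, f (φ y) = f a₀ + #{y ∈ s | φ y = a₁} • f a₁ + #{y ∈ s | φ y = a₂} • f a₂
      + #{y ∈ s | φ y = a₃} • f a₃ := by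
  have hmaps : ∀ y ∈ s, φ y ∈ ({a₀, a₁, a₂, a₃} : Finset V) := by
    intro y hy
    by_cases hyx : y = x
    · simp [hyx, hφx]
    · rcases hφ y hy (Ne.symm hyx) with h | h | h <;> simp [h]
  obtain ⟨⟨h01, h02, h03⟩, ⟨h12, h13⟩, h23⟩ : (a₀ ≠ a₁ ∧ a₀ ≠ a₂ ∧ a₀ ≠ a₃) ∧
      (a₁ ≠ a₂ ∧ a₁ ≠ a₃) ∧ a₂ ≠ a₃ := by simpa using ha
  have hfiber : {y ∈ s | φ y = a₀} = {x} := by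
    ext y
    simp only [mem_filter, mem_singleton]
    refine ⟨fun ⟨hy, hya⟩ ↦ by_contra fun hyx ↦ ?_, fun hyx ↦ hyx ▸ ⟨hx, hφx⟩⟩
    rcases hφ y hy (Ne.symm hyx) with h | h | h <;> simp_all
  rw [← sum_fiberwise_of_maps_to' hmaps, sum_insert (by simp [h01, h02, h03]),
    sum_insert (by simp [h12, h13]), sum_pair h23, hfiber]
  simp only [sum_const, card_singleton, one_smul, add_assoc]

local notation "α₁" => (-16 / 111 : ℂ)
local notation "α₂" => (31 / 666 : ℂ) + (Real.sqrt (127 / 37) / 18 : ℝ) * Complex.I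
local notation "α₃" => (31 / 666 : ℂ) - (Real.sqrt (127 / 37) / 18 : ℝ) * Complex.I

theorem row_sum_cube_neg :
    1 + 222 * α₁ ^ 3 + 333 * α₂ ^ 3 + 333 * α₃ ^ 3 < 0 := by
  set q : ℝ := Real.sqrt (127 / 37) / 18
  have hq : (q : ℂ) ^ 2 = 127 / 11988 := by
    rw [← Complex.ofReal_pow, div_pow, Real.sq_sqrt (by norm_num)]
    push_cast; norm_num
  calc _ = 1 + 222 * α₁ ^ 3 + 333 * (2 * (31 / 666) ^ 3 - 6 * (31 / 666) * (q : ℂ) ^ 2) := by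
          linear_combination (333 * 6 * (31 / 666) * (q : ℂ) ^ 2) * Complex.I_sq
    _ = ((1 + 222 * (-16 / 111) ^ 3 + 333 * (2 * (31 / 666) ^ 3 - 6 * (31 / 666) * (127 / 11988))
          : ℝ) : ℂ) := by rw [hq]; push_cast; ring
    _ < 0 := by exact_mod_cast (by norm_num : (1 + 222 * (-16 / 111) ^ 3
          + 333 * (2 * (31 / 666) ^ 3 - 6 * (31 / 666) * (127 / 11988)) : ℝ) < 0)

theorem nodup_one_and_inner_values :
    [1, α₁, α₂, α₃].Nodup := by
  have hq : 0 < Real.sqrt (127 / 37) / 18 := by positivity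
  generalize Real.sqrt (127 / 37) / 18 = q at hq ⊢
  norm_num [Complex.ext_iff, hq.ne']
  linarith

theorem no_complex_three_code_889 :
    ¬ ∃ X : Finset (Fin 63 → ℂ), X.Nonempty ∧
      (∀ z ∈ X, hermInner z z = 1) ∧
      (∀ x ∈ X, ∀ y ∈ X, x ≠ y →
        hermInner x y = (-16 / 111 : ℂ) ∨
        hermInner x y = (31 / 666 : ℂ) + (Real.sqrt (127 / 37) / 18 : ℝ) * Complex.I ∨
        hermInner x y = (31 / 666 : ℂ) - (Real.sqrt (127 / 37) / 18 : ℝ) * Complex.I) ∧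
      (∀ x ∈ X,
        (X.filter fun y => hermInner x y = (-16 / 111 : ℂ)).card = 222 ∧
        (X.filter fun y =>
          hermInner x y = (31 / 666 : ℂ) + (Real.sqrt (127 / 37) / 18 : ℝ) * Complex.I).card
            = 333 ∧
        (X.filter fun y =>
          hermInner x y = (31 / 666 : ℂ) - (Real.sqrt (127 / 37) / 18 : ℝ) * Complex.I).card
            = 333) := by
  rintro ⟨X, hne, hunit, hvals, hcards⟩
  have hrow : ∀ x ∈ X, ∑ y ∈ X, hermInner x y ^ 3 =
      1 + 222 * α₁ ^ 3 + 333 * α₂ ^ 3 + 333 * α₃ ^ 3 := by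
    intro x hx
    obtain ⟨h₁, h₂, h₃⟩ := hcards x hx
    rw [sum_comp_eq_of_three_values hx nodup_one_and_inner_values (hunit x hx) (hvals x hx)
      (· ^ 3), h₁, h₂, h₃]
    simp only [one_pow, nsmul_eq_mul, Nat.cast_ofNat]
  have hnonneg := sum_sum_hermInner_pow_nonneg X 3
  rw [sum_congr rfl hrow, sum_const, nsmul_eq_mul] at hnonneg
  exact (mul_neg_of_pos_of_neg (by exact_mod_cast hne.card_pos) row_sum_cube_neg).not_ge
    hnonneg
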